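/- Let A and ε be random variables and V a random vector with A ⊥ ε | V. Let Y(a) = g(a, ε) for a measurable g with E∫|g(a,ε)|π(a)dμ(a) < ∞ for a signed weight π. Then E[∫ E[Y | A = a, V] π(a) dμ(a)] = E[∫ g(a, ε) π(a) dμ(a)], where Y = g(A, ε). -/

import Mathlib

/-!
Conditional independence of `A` and `ε` given `V` says that, on each cell `{V = v}`, the
mean of `g(a, ε)` over the sub-cell `{A = a}` equals its mean over the whole cell; on that
sub-cell `Y = g(a, ε)`, so `E[Y | A = a, V]` is `E[g(a, ε) | V]`. Averaging over `V` (the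
tower property) turns it into `E[g(a, ε)]`, and exchanging the finite sums over `a` and
`ω` gives the identity.
-/

open Classical in
noncomputable def pr {Ω : Type*} [Fintype Ω] (p : Ω → ℝ) (E : Ω → Prop) : ℝ :=
  ∑ ω, if E ω then p ω else 0

-- `∑_{ω ∈ E} p ω * f ω`, the unnormalized conditional expectation of `f` on event `E`.
open Classical in
noncomputable def cex {Ω : Type*} [Fintype Ω] (p : Ω → ℝ) (f : Ω → ℝ) (E : Ω → Prop) : ℝ :=
  ∑ ω, if E ω then p ω * f ω else 0

open Classical Finset

section Discrete

variable {Ω α 𝓔 𝓥 : Type*} [Fintype Ω] (p : Ω → ℝ)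

lemma pr_congr {E F : Ω → Prop} (h : ∀ ω, E ω ↔ F ω) : pr p E = pr p F := by
  simp only [pr, h]

lemma cex_congr {f f' : Ω → ℝ} {E : Ω → Prop} (h : ∀ ω, E ω → f ω = f' ω) :
    cex p f E = cex p f' E :=
  sum_congr rfl fun ω _ => by split_ifs with hE <;> simp [hE, h]

lemma pr_eq_sum_pr_and [Fintype α] (A : Ω → α) (C : Ω → Prop) :
    pr p C = ∑ a, pr p (fun ω => A ω = a ∧ C ω) := by
  unfold pr
  rw [sum_comm]
  refine sum_congr rfl fun ω _ => ?_
  by_cases hC : C ω <;> simp [hC]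

lemma cex_comp_eq_sum_mul_pr (ε : Ω → 𝓔) (w : 𝓔 → ℝ) (P : Ω → Prop) :
    cex p (fun ω => w (ε ω)) P = ∑ e ∈ univ.image ε, w e * pr p (fun ω => ε ω = e ∧ P ω) := by
  unfold cex pr
  simp only [mul_sum]
  rw [sum_comm]
  refine sum_congr rfl fun ω _ => ?_
  have hmem : ε ω ∈ univ.image ε := mem_image_of_mem ε (mem_univ ω)
  by_cases hP : P ω <;> simp [hP, hmem, mul_comm]

lemma cex_comp_mul_pr_of_condIndep (B C : Ω → Prop) (ε : Ω → 𝓔) (w : 𝓔 → ℝ)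
    (hCI : ∀ e, pr p (fun ω => B ω ∧ ε ω = e ∧ C ω) * pr p C
      = pr p (fun ω => B ω ∧ C ω) * pr p (fun ω => ε ω = e ∧ C ω)) :
    cex p (fun ω => w (ε ω)) (fun ω => B ω ∧ C ω) * pr p C
      = cex p (fun ω => w (ε ω)) C * pr p (fun ω => B ω ∧ C ω) := by
  rw [cex_comp_eq_sum_mul_pr, cex_comp_eq_sum_mul_pr, sum_mul, sum_mul]
  refine sum_congr rfl fun e _ => ?_
  rw [pr_congr p (fun ω => and_left_comm), mul_assoc, hCI e]
  ring

lemma cex_div_pr_and_eq_of_condIndep (B C : Ω → Prop) (ε : Ω → 𝓔) (w : 𝓔 → ℝ)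
    (hBC : pr p (fun ω => B ω ∧ C ω) ≠ 0) (hC : pr p C ≠ 0)
    (hCI : ∀ e, pr p (fun ω => B ω ∧ ε ω = e ∧ C ω) * pr p C
      = pr p (fun ω => B ω ∧ C ω) * pr p (fun ω => ε ω = e ∧ C ω)) :
    cex p (fun ω => w (ε ω)) (fun ω => B ω ∧ C ω) / pr p (fun ω => B ω ∧ C ω)
      = cex p (fun ω => w (ε ω)) C / pr p C := by
  rw [div_eq_div_iff hBC hC]
  exact cex_comp_mul_pr_of_condIndep p B C ε w hCI

lemma sum_mul_cex_div_pr_eq (V : Ω → 𝓥) (hV : ∀ ω, pr p (fun ω' => V ω' = V ω) ≠ 0)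
    (h : Ω → ℝ) :
    ∑ ω, p ω * (cex p h (fun ω' => V ω' = V ω) / pr p (fun ω' => V ω' = V ω))
      = ∑ ω, p ω * h ω := by
  have hterm : ∀ ω ω', p ω * ((if V ω' = V ω then p ω' * h ω' else 0)
        / pr p (fun ω'' => V ω'' = V ω))
      = p ω' * h ω' / pr p (fun ω'' => V ω'' = V ω') * (if V ω = V ω' then p ω else 0) := by
    intro ω ω'
    by_cases hVV : V ω' = V ω
    · simp only [hVV, if_true]
      ring
    · simp only [hVV, Ne.symm hVV, if_false, zero_div, mul_zero]
  simp only [cex, sum_div, mul_sum, hterm]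
  rw [sum_comm]
  refine sum_congr rfl fun ω' _ => ?_
  rw [← mul_sum]
  exact div_mul_cancel₀ _ (hV ω')

end Discrete

lemma sum_mul_sum_mul_comm {ι κ R : Type*} [CommSemiring R] (s : Finset ι) (t : Finset κ)
    (p : ι → R) (π : κ → R) (f : κ → ι → R) :
    ∑ i ∈ s, p i * ∑ k ∈ t, π k * f k i = ∑ k ∈ t, π k * ∑ i ∈ s, p i * f k i := by
  simp only [mul_sum]
  rw [sum_comm]
  simp only [mul_left_comm]

-- Discrete setting: the treatment space is finite and `π a` carries both the sign weight and
-- the base measure `μ`, so `∫ · π(a) dμ(a)` is `∑ a, π a * ·`.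
theorem average_structural_identification_general
    {Ω α 𝓥 𝓔 : Type*} [Fintype Ω] [Fintype α]
    (p : Ω → ℝ)
    (A : Ω → α) (ε : Ω → 𝓔) (V : Ω → 𝓥) (g : α → 𝓔 → ℝ) (π : α → ℝ) (Y : Ω → ℝ)
    (hY : ∀ ω, Y ω = g (A ω) (ε ω))
    -- common support: every (a, v)-cell that is conditioned on has positive probability
    (hpos : ∀ (a : α) (ω : Ω), 0 < pr p (fun ω' => A ω' = a ∧ V ω' = V ω))
    -- A ⊥ ε | V
    (hCI : ∀ (a : α) (e : 𝓔) (v : 𝓥),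
      pr p (fun ω => A ω = a ∧ ε ω = e ∧ V ω = v) * pr p (fun ω => V ω = v)
        = pr p (fun ω => A ω = a ∧ V ω = v) * pr p (fun ω => ε ω = e ∧ V ω = v)) :
    ∑ ω, p ω * (∑ a, π a *
        (cex p Y (fun ω' => A ω' = a ∧ V ω' = V ω)
          / pr p (fun ω' => A ω' = a ∧ V ω' = V ω)))
      = ∑ ω, p ω * (∑ a, π a * g a (ε ω)) := by
  have hV : ∀ ω, pr p (fun ω' => V ω' = V ω) ≠ 0 := fun ω =>
    (pr_eq_sum_pr_and p A _ ▸ sum_pos (fun a _ => hpos a ω) ⟨A ω, mem_univ _⟩).ne'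
  have hcell : ∀ ω a, cex p Y (fun ω' => A ω' = a ∧ V ω' = V ω)
        / pr p (fun ω' => A ω' = a ∧ V ω' = V ω)
      = cex p (fun ω' => g a (ε ω')) (fun ω' => V ω' = V ω) / pr p (fun ω' => V ω' = V ω) := by
    intro ω a
    rw [cex_congr p fun ω' h => by rw [hY ω', h.1]]
    exact cex_div_pr_and_eq_of_condIndep p _ _ ε (g a) (hpos a ω).ne' (hV ω)
      fun e => hCI a e (V ω)
  simp only [hcell]
  rw [sum_mul_sum_mul_comm]
  simp only [sum_mul_cex_div_pr_eq p V hV]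
  exact (sum_mul_sum_mul_comm univ univ p π fun a ω => g a (ε ω)).symm

/-- with `A ⊥ ε | V` and `Y = g(A, ε)`,
`E[∫ E[Y | A = a, V] π(a) dμ(a)] = E[∫ g(a, ε) π(a) dμ(a)]`.
Discrete setting: the treatment space is finite and `π a` carries both the sign
weight and the base measure μ, so `∫ · π(a) dμ(a)` is `∑ a, π a * ·`. -/
theorem average_structural_identification
    {Ω α 𝓥 𝓔 : Type*} [Fintype Ω] [Fintype α]
    (p : Ω → ℝ) (hp : ∀ ω, 0 < p ω) (hsum : ∑ ω, p ω = 1)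
    (A : Ω → α) (ε : Ω → 𝓔) (V : Ω → 𝓥) (g : α → 𝓔 → ℝ) (π : α → ℝ) (Y : Ω → ℝ)
    (hY : ∀ ω, Y ω = g (A ω) (ε ω))
    -- common support: every (a, v)-cell that is conditioned on has positive probability
    (hpos : ∀ (a : α) (ω : Ω), 0 < pr p (fun ω' => A ω' = a ∧ V ω' = V ω))
    -- A ⊥ ε | V
    (hCI : ∀ (a : α) (e : 𝓔) (v : 𝓥),
      pr p (fun ω => A ω = a ∧ ε ω = e ∧ V ω = v) * pr p (fun ω => V ω = v)
        = pr p (fun ω => A ω = a ∧ V ω = v) * pr p (fun ω => ε ω = e ∧ V ω = v)) :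
    ∑ ω, p ω * (∑ a, π a *
        (cex p Y (fun ω' => A ω' = a ∧ V ω' = V ω)
          / pr p (fun ω' => A ω' = a ∧ V ω' = V ω)))
      = ∑ ω, p ω * (∑ a, π a * g a (ε ω)) :=
  average_structural_identification_general p A ε V g π Y hY hpos hCI
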